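/- The only solution of the Diophantine equation D_2(n) = p^k with unknowns p a prime number and n, k ∈ ℕ_+ is (p, n, k) = (2, 2, 1). -/

import Mathlib

/-- The `r`-derangement number `D_r(n)`: the number of fixed-point-free permutations
of `n + r` elements such that the first `r` (distinguished) elements lie in pairwise
distinct cycles of the cycle decomposition. -/
noncomputable def rDerangement (r n : ℕ) : ℕ :=
  Nat.card {σ : Equiv.Perm (Fin (n + r)) //
    (∀ x, σ x ≠ x) ∧
    ∀ i j : Fin (n + r), (i : ℕ) < r → (j : ℕ) < r → i ≠ j → ¬ σ.SameCycle i j}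

open Equiv Equiv.Perm Finset

section Aux
variable (n : ℕ)

private abbrev aElt : Fin (n + 2) := ⟨0, by omega⟩
private abbrev bElt : Fin (n + 2) := ⟨1, by omega⟩

private lemma ne_ab (x : Fin (n + 2)) (hx : 2 ≤ x.val) : x ≠ aElt n ∧ x ≠ bElt n := by
  constructor <;> · rintro rfl; simp at hx

private lemma swap_lemma (x₁ y₁ x₂ y₂ : Fin (n + 2))
    (hx₁ : 2 ≤ x₁.val) (hy₁ : 2 ≤ y₁.val) (hx₂ : 2 ≤ x₂.val) (hy₂ : 2 ≤ y₂.val)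
    (h1 : x₁ ≠ y₁) (h2 : x₂ ≠ y₂) :
    ∃ τ : Perm (Fin (n + 2)),
      τ (aElt n) = aElt n ∧ τ (bElt n) = bElt n ∧ τ x₁ = x₂ ∧ τ y₁ = y₂ := by
  set s := Equiv.swap x₁ x₂ with hs
  set u := s y₁ with hu
  refine ⟨Equiv.swap u y₂ * s, ?_, ?_, ?_, ?_⟩
  · have hsa : s (aElt n) = aElt n :=
      Equiv.swap_apply_of_ne_of_ne ((ne_ab n x₁ hx₁).1.symm) ((ne_ab n x₂ hx₂).1.symm)
    have hua : u ≠ aElt n := by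
      intro h
      have : y₁ = aElt n := s.injective (by rw [← hu, h, hsa])
      rw [this] at hy₁; simp at hy₁
    simp only [Perm.mul_apply, hsa]
    exact Equiv.swap_apply_of_ne_of_ne (Ne.symm hua) ((ne_ab n y₂ hy₂).1.symm)
  · have hsb : s (bElt n) = bElt n :=
      Equiv.swap_apply_of_ne_of_ne ((ne_ab n x₁ hx₁).2.symm) ((ne_ab n x₂ hx₂).2.symm)
    have hub : u ≠ bElt n := by
      intro h
      have : y₁ = bElt n := s.injective (by rw [← hu, h, hsb])
      rw [this] at hy₁; simp at hy₁
    simp only [Perm.mul_apply, hsb]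
    exact Equiv.swap_apply_of_ne_of_ne (Ne.symm hub) ((ne_ab n y₂ hy₂).2.symm)
  · have hsx : s x₁ = x₂ := Equiv.swap_apply_left x₁ x₂
    have hux : u ≠ x₂ := by
      intro h
      exact h1 (s.injective (by rw [← hu, h, hsx])).symm
    simp only [Perm.mul_apply, hsx]
    exact Equiv.swap_apply_of_ne_of_ne (Ne.symm hux) h2
  · simp only [Perm.mul_apply, ← hu]
    exact Equiv.swap_apply_left u y₂

private lemma cond_iff (σ : Perm (Fin (n + 2))) :
    ((∀ x, σ x ≠ x) ∧
      ∀ i j : Fin (n + 2), (i : ℕ) < 2 → (j : ℕ) < 2 → i ≠ j → ¬ σ.SameCycle i j) ↔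
    ((∀ x, σ x ≠ x) ∧ ¬ σ.SameCycle (aElt n) (bElt n)) := by
  have hlt : ∀ i : Fin (n + 2), (i : ℕ) < 2 → i = aElt n ∨ i = bElt n := by
    intro i hi
    have : i.val = 0 ∨ i.val = 1 := by omega
    rcases this with h | h
    · exact Or.inl (Fin.ext h)
    · exact Or.inr (Fin.ext h)
  constructor
  · rintro ⟨h1, h2⟩
    exact ⟨h1, h2 _ _ (by simp) (by simp) (by simp [Fin.ext_iff])⟩
  · rintro ⟨h1, h2⟩
    refine ⟨h1, ?_⟩
    intro i j hi hj hij
    rcases hlt i hi with rfl | rfl <;> rcases hlt j hj with rfl | rfl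
    · exact absurd rfl hij
    · exact h2
    · exact fun h => h2 h.symm
    · exact absurd rfl hij

private lemma conj_cond (τ σ : Perm (Fin (n + 2)))
    (ha : τ (aElt n) = aElt n) (hb : τ (bElt n) = bElt n)
    (h1 : ∀ x, σ x ≠ x) (h2 : ¬ σ.SameCycle (aElt n) (bElt n)) :
    (∀ x, (τ * σ * τ⁻¹) x ≠ x) ∧ ¬ (τ * σ * τ⁻¹).SameCycle (aElt n) (bElt n) := by
  have hai : τ⁻¹ (aElt n) = aElt n := by
    conv_lhs => rw [← ha]
    exact Equiv.Perm.inv_eq_iff_eq.mpr rfl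
  have hbi : τ⁻¹ (bElt n) = bElt n := by
    conv_lhs => rw [← hb]
    exact Equiv.Perm.inv_eq_iff_eq.mpr rfl
  constructor
  · intro x hx
    apply h1 (τ⁻¹ x)
    simp only [Perm.mul_apply] at hx
    have := congrArg (⇑τ⁻¹) hx
    simpa using this
  · rw [Equiv.Perm.sameCycle_conj, hai, hbi]
    exact h2
end Aux

lemma rDerangement_two_card (n : ℕ) :
    rDerangement 2 n = (Finset.univ.filter (fun σ : Perm (Fin (n + 2)) =>
      (∀ x, σ x ≠ x) ∧
      ∀ i j : Fin (n + 2), (i : ℕ) < 2 → (j : ℕ) < 2 → i ≠ j → ¬ σ.SameCycle i j)).card := by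
  classical
  rw [rDerangement, Nat.card_eq_fintype_card, Fintype.card_subtype]

lemma rDerangement_two_dvd (n : ℕ) (hn : 2 ≤ n) :
    n * (n - 1) ∣ rDerangement 2 n := by
  classical
  rw [rDerangement_two_card]
  set S : Finset (Perm (Fin (n + 2))) := Finset.univ.filter (fun σ =>
      (∀ x, σ x ≠ x) ∧
      ∀ i j : Fin (n + 2), (i : ℕ) < 2 → (j : ℕ) < 2 → i ≠ j → ¬ σ.SameCycle i j) with hS
  have memS : ∀ σ, σ ∈ S ↔ ((∀ x, σ x ≠ x) ∧ ¬ σ.SameCycle (aElt n) (bElt n)) := by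
    intro σ
    rw [hS, Finset.mem_filter]
    simp only [Finset.mem_univ, true_and]
    exact cond_iff n σ
  set T : Finset (Fin (n + 2)) := Finset.univ.filter (fun x => 2 ≤ x.val) with hT
  have hTcard : T.card = n := by
    have : T = Finset.image (fun i : Fin n => (⟨i.val + 2, by omega⟩ : Fin (n + 2)))
        Finset.univ := by
      ext x
      simp only [hT, Finset.mem_filter, Finset.mem_univ, true_and, Finset.mem_image]
      constructor
      · intro hx
        exact ⟨⟨x.val - 2, by omega⟩, by ext; simp; omega⟩
      · rintro ⟨i, rfl⟩; simp
    rw [this, Finset.card_image_of_injective _ (fun i j h => by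
      simpa [Fin.ext_iff] using h), Finset.card_univ, Fintype.card_fin]
  set P := T.offDiag with hP
  have hPcard : P.card = n * (n - 1) := by
    rw [hP, Finset.offDiag_card, hTcard]
    rcases n with _ | m
    · omega
    · simp [Nat.mul_succ, Nat.succ_mul]
  have hval : ∀ x : Fin (n + 2), x ≠ aElt n → x ≠ bElt n → 2 ≤ x.val := by
    intro x hxa hxb
    rcases Nat.lt_or_ge x.val 2 with h | h
    · have : x.val = 0 ∨ x.val = 1 := by omega
      rcases this with h' | h'
      · exact absurd (Fin.ext h') hxa
      · exact absurd (Fin.ext h') hxb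
    · exact h
  have hmem : ∀ σ ∈ S, ((σ (aElt n), σ (bElt n)) : Fin (n+2) × Fin (n+2)) ∈ P := by
    intro σ hσ
    rw [memS] at hσ
    obtain ⟨h1, h2⟩ := hσ
    rw [hP, Finset.mem_offDiag]
    refine ⟨?_, ?_, ?_⟩
    · rw [hT, Finset.mem_filter]
      refine ⟨Finset.mem_univ _, hval _ (h1 _) ?_⟩
      intro h
      exact h2 ⟨1, by simpa using h⟩
    · rw [hT, Finset.mem_filter]
      refine ⟨Finset.mem_univ _, hval _ ?_ (h1 _)⟩
      intro h
      exact h2 (Equiv.Perm.SameCycle.symm ⟨1, by simpa using h⟩)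
    · simp only [ne_eq, EmbeddingLike.apply_eq_iff_eq]
      simp [Fin.ext_iff]
  have hsum : S.card = ∑ q ∈ P, (S.filter (fun σ => (σ (aElt n), σ (bElt n)) = q)).card :=
    Finset.card_eq_sum_card_fiberwise hmem
  have hfib : ∀ q ∈ P, ∀ q' ∈ P,
      (S.filter (fun σ => (σ (aElt n), σ (bElt n)) = q)).card
        = (S.filter (fun σ => (σ (aElt n), σ (bElt n)) = q')).card := by
    rintro ⟨x₁, y₁⟩ hq ⟨x₂, y₂⟩ hq'
    rw [hP, Finset.mem_offDiag] at hq hq'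
    obtain ⟨hx1, hy1, hxy1⟩ := hq
    obtain ⟨hx2, hy2, hxy2⟩ := hq'
    rw [hT, Finset.mem_filter] at hx1 hy1 hx2 hy2
    obtain ⟨τ, hτa, hτb, hτx, hτy⟩ := swap_lemma n x₁ y₁ x₂ y₂
      hx1.2 hy1.2 hx2.2 hy2.2 hxy1 hxy2
    have hτai : τ⁻¹ (aElt n) = aElt n := by
      conv_lhs => rw [← hτa]
      exact Equiv.Perm.inv_eq_iff_eq.mpr rfl
    have hτbi : τ⁻¹ (bElt n) = bElt n := by
      conv_lhs => rw [← hτb]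
      exact Equiv.Perm.inv_eq_iff_eq.mpr rfl
    apply Finset.card_bij' (fun σ _ => τ * σ * τ⁻¹) (fun σ _ => τ⁻¹ * σ * τ)
    · intro σ hσ
      rw [Finset.mem_filter] at hσ ⊢
      obtain ⟨hσS, hfσ⟩ := hσ
      rw [memS] at hσS
      obtain ⟨h1, h2⟩ := hσS
      have hc := conj_cond n τ σ hτa hτb h1 h2
      refine ⟨(memS _).mpr hc, ?_⟩
      have h1' : σ (aElt n) = x₁ := by simpa using congrArg Prod.fst hfσ
      have h2' : σ (bElt n) = y₁ := by simpa using congrArg Prod.snd hfσ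
      simp only [Perm.mul_apply, hτai, hτbi, h1', h2', hτx, hτy]
    · intro σ hσ
      rw [Finset.mem_filter] at hσ ⊢
      obtain ⟨hσS, hfσ⟩ := hσ
      rw [memS] at hσS
      obtain ⟨h1, h2⟩ := hσS
      have hc := conj_cond n τ⁻¹ σ hτai hτbi h1 h2
      rw [inv_inv] at hc
      refine ⟨(memS _).mpr hc, ?_⟩
      have h1' : σ (aElt n) = x₂ := by simpa using congrArg Prod.fst hfσ
      have h2' : σ (bElt n) = y₂ := by simpa using congrArg Prod.snd hfσ
      have hτxi : τ⁻¹ x₂ = x₁ := by rw [← hτx]; exact Equiv.Perm.inv_eq_iff_eq.mpr rfl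
      have hτyi : τ⁻¹ y₂ = y₁ := by rw [← hτy]; exact Equiv.Perm.inv_eq_iff_eq.mpr rfl
      simp only [Perm.mul_apply, hτa, hτb, h1', h2', hτxi, hτyi]
    · intro σ _; group
    · intro σ _; group
  have hp₀ : ((⟨2, by omega⟩ : Fin (n + 2)), (⟨3, by omega⟩ : Fin (n + 2))) ∈ P := by
    simp [hP, hT, Finset.mem_offDiag, Fin.ext_iff]
  set m := (S.filter (fun σ => (σ (aElt n), σ (bElt n)) =
    ((⟨2, by omega⟩ : Fin (n + 2)), (⟨3, by omega⟩ : Fin (n + 2))))).card with hm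
  have : S.card = P.card * m := by
    rw [hsum, Finset.sum_congr rfl (fun q hq => hfib q hq _ hp₀), Finset.sum_const,
      smul_eq_mul]
  rw [this, hPcard]
  exact Dvd.intro m rfl

lemma rDerangement_two_one : rDerangement 2 1 = 0 := by
  rw [rDerangement, Nat.card_eq_fintype_card]
  decide

lemma rDerangement_two_two : rDerangement 2 2 = 2 := by
  rw [rDerangement, Nat.card_eq_fintype_card]
  decide

theorem rDerangement_two_eq_prime_pow (p n k : ℕ) :
    (p.Prime ∧ 0 < n ∧ 0 < k ∧ rDerangement 2 n = p ^ k) ↔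
      p = 2 ∧ n = 2 ∧ k = 1 := by
  constructor
  · rintro ⟨hp, hn, hk, heq⟩
    rcases Nat.lt_or_ge n 3 with h3 | h3
    · interval_cases n
      · rw [rDerangement_two_one] at heq
        exact absurd heq.symm (pow_ne_zero k hp.pos.ne')
      · rw [rDerangement_two_two] at heq
        have hpd : p ∣ 2 := heq ▸ dvd_pow_self p hk.ne'
        have hp2 : p = 2 := (Nat.prime_dvd_prime_iff_eq hp Nat.prime_two).mp hpd
        subst hp2
        have hk1 : k = 1 := by
          have := heq.symm
          rcases Nat.lt_or_ge k 2 with hk2 | hk2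
          · omega
          · exfalso
            have : (2 : ℕ) ^ 2 ≤ 2 ^ k := Nat.pow_le_pow_right (by norm_num) hk2
            omega
        exact ⟨rfl, rfl, hk1⟩
    · exfalso
      have hdvd := rDerangement_two_dvd n (by omega)
      rw [heq] at hdvd
      have hn1 : n ∣ p ^ k := dvd_trans (Dvd.intro _ rfl) hdvd
      have hn2 : (n - 1) ∣ p ^ k := dvd_trans (Dvd.intro_left _ rfl) hdvd
      obtain ⟨q, hq, hqn⟩ := Nat.exists_prime_and_dvd (show n ≠ 1 by omega)
      obtain ⟨r, hr, hrn⟩ := Nat.exists_prime_and_dvd (show n - 1 ≠ 1 by omega)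
      have hq' : q = p := (Nat.prime_dvd_prime_iff_eq hq hp).mp
        (hq.dvd_of_dvd_pow (hqn.trans hn1))
      have hr' : r = p := (Nat.prime_dvd_prime_iff_eq hr hp).mp
        (hr.dvd_of_dvd_pow (hrn.trans hn2))
      rw [hq'] at hqn
      rw [hr'] at hrn
      have h1 : p ∣ n - (n - 1) := Nat.dvd_sub hqn hrn
      have h2 : n - (n - 1) = 1 := by omega
      rw [h2] at h1
      exact hp.one_lt.ne' (Nat.dvd_one.mp h1)
  · rintro ⟨rfl, rfl, rfl⟩
    exact ⟨Nat.prime_two, by norm_num, by norm_num, by rw [rDerangement_two_two]; norm_num⟩
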